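/- arXiv:1606.09588 — 5 statements merged into one kernel-verified Lean document; each statement's English description precedes it below -/
import Mathlib

section
/- Let n be an even positive integer, 0 < p < 1, and let t be an even positive integer. Then the involution walk satisfies ‖P^{*t} − U‖_TV ≥ (1/2)·(1 − 2p)^{t n /2}. -/
/-! The sign is a real character of `S_n` whose values sum to zero, so
`|∑ g, (P^{*t} g - 1/n!) * sign g| ≤ 2 ‖P^{*t} - U‖_TV`, and since characters are multiplicative
under convolution the left side is `(∑ σ, P σ * sign σ) ^ t`. An involution with `s`
transpositions has sign `(-1)^s`, and there are `n! / (2^s s! (n-2s)!)` of them, so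
`∑ σ, P σ * sign σ = ∑ s, (n/2 choose s) p^(n/2-s) (p-1)^s = (2p-1)^(n/2)`. -/

open Finset

/-- One step of the involution walk on `S_n`: an involution `σ` with `s` transpositions
(so `σ.support.card = 2*s`) has probability
`(n/2 choose s) * p^(n/2-s) * (1-p)^s * 2^s * s! * (n-2s)! / n!`;
non-involutions have probability `0`. -/
noncomputable def stepP (n : ℕ) (p : ℝ) (σ : Equiv.Perm (Fin n)) : ℝ :=
  if σ * σ = 1 then
    ((n / 2).choose (σ.support.card / 2) : ℝ) * p ^ (n / 2 - σ.support.card / 2) *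
      (1 - p) ^ (σ.support.card / 2) * (2 : ℝ) ^ (σ.support.card / 2) *
      (Nat.factorial (σ.support.card / 2) : ℝ) * (Nat.factorial (n - σ.support.card) : ℝ) /
      (Nat.factorial n : ℝ)
  else 0

/-- The `t`-step distribution of the involution walk:
`P^{*t}(g) = Σ_{g₁⋯g_t = g} P(g₁)⋯P(g_t)`, defined by convolution. -/
noncomputable def convPow (n : ℕ) (p : ℝ) : ℕ → Equiv.Perm (Fin n) → ℝ
  | 0 => fun g => if g = 1 then 1 else 0
  | t + 1 => fun g => ∑ h : Equiv.Perm (Fin n), stepP n p h * convPow n p t (h⁻¹ * g)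

/-- Total variation distance between `P^{*t}` and the uniform distribution:
`(1/2) Σ_g |P^{*t}(g) − 1/n!|`. -/
noncomputable def tvDist (n : ℕ) (p : ℝ) (t : ℕ) : ℝ :=
  (1 / 2) * ∑ g : Equiv.Perm (Fin n), |convPow n p t g - 1 / (Nat.factorial n : ℝ)|

namespace Equiv.Perm

variable {α : Type*} [Fintype α] [DecidableEq α]

theorem cycleType_eq_replicate_two_iff {σ : Perm α} {s : ℕ} :
    σ.cycleType = Multiset.replicate s 2 ↔ σ * σ = 1 ∧ #σ.support = 2 * s := by
  rw [← sq]
  constructor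
  · intro h
    refine ⟨pow_prime_eq_one_iff.mpr fun c hc => ?_, ?_⟩
    · rw [h] at hc
      exact Multiset.eq_of_mem_replicate hc
    · rw [← sum_cycleType, h, Multiset.sum_replicate, smul_eq_mul, mul_comm]
  · rintro ⟨hsq, hcard⟩
    have h := cycleType_of_pow_prime_eq_one hsq
    rw [← sum_cycleType, h, Multiset.sum_replicate, smul_eq_mul] at hcard
    rwa [show Multiset.card σ.cycleType = s by omega] at h

theorem card_cycleType_eq_replicate_two_mul {s : ℕ} (hs : 2 * s ≤ Fintype.card α) :
    #({σ | σ.cycleType = Multiset.replicate s 2} : Finset (Perm α)) *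
      (2 ^ s * s.factorial * (Fintype.card α - 2 * s).factorial) = (Fintype.card α).factorial := by
  have h := card_of_cycleType_mul_eq α (Multiset.replicate s 2)
  rw [if_pos ⟨by simpa [mul_comm] using hs, fun a ha => (Multiset.eq_of_mem_replicate ha).ge⟩] at h
  rcases Nat.eq_zero_or_pos s with rfl | hs0
  · simpa using h
  · rw [← h, Multiset.toFinset_replicate, if_neg hs0.ne', Finset.prod_singleton,
      Multiset.count_replicate_self, Multiset.sum_replicate, Multiset.prod_replicate, smul_eq_mul,
      mul_comm s 2]
    ring

theorem sign_of_cycleType_eq_replicate_two {σ : Perm α} {s : ℕ}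
    (h : σ.cycleType = Multiset.replicate s 2) : sign σ = (-1) ^ s := by
  rw [sign_of_cycleType, h, Multiset.sum_replicate, Multiset.card_replicate, smul_eq_mul,
    pow_add, pow_mul]
  simp

theorem sum_eq_sum_cycleType_eq_replicate_two {M : Type*} [AddCommMonoid M] (f : Perm α → M)
    (hf : ∀ σ, σ * σ ≠ 1 → f σ = 0) :
    ∑ σ, f σ = ∑ s ∈ range (Fintype.card α / 2 + 1),
      ∑ σ with σ.cycleType = Multiset.replicate s 2, f σ := by
  rw [← sum_filter_of_ne fun σ _ hσ => not_imp_comm.mp (hf σ) hσ,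
    ← sum_fiberwise_of_maps_to (g := fun σ => #σ.support / 2) (t := range (Fintype.card α / 2 + 1))
      fun σ _ => mem_range_succ_iff.mpr (Nat.div_le_div_right (card_le_univ _))]
  refine sum_congr rfl fun s _ => sum_congr ?_ fun _ _ => rfl
  ext σ
  simp only [filter_filter, mem_filter, mem_univ, true_and, cycleType_eq_replicate_two_iff]
  have := two_dvd_card_support (σ := σ)
  constructor
  · rintro ⟨hsq, rfl⟩
    exact ⟨hsq, (Nat.mul_div_cancel' (this (sq σ ▸ hsq))).symm⟩
  · rintro ⟨hsq, hcard⟩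
    exact ⟨hsq, by omega⟩

variable (α) in
noncomputable def signReal : Perm α →* ℝ :=
  (Int.castRingHom ℝ).toMonoidHom.comp ((Units.coeHom ℤ).comp sign)

@[simp]
theorem signReal_apply (σ : Perm α) : signReal α σ = ((sign σ : ℤ) : ℝ) := rfl

theorem abs_signReal (σ : Perm α) : |signReal α σ| = 1 := by
  rcases Int.units_eq_one_or (sign σ) with h | h <;> simp [h]

theorem sum_signReal [Nontrivial α] : ∑ σ, signReal α σ = 0 := by
  refine sum_hom_units_eq_zero _ fun h => ?_
  obtain ⟨a, b, hab⟩ := exists_pair_ne α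
  have := DFunLike.congr_fun h (swap a b)
  norm_num [sign_swap hab] at this

end Equiv.Perm

open Equiv Equiv.Perm

theorem Finset.sum_convolution_mul_monoidHom {G R : Type*} [Group G] [Fintype G] [CommSemiring R]
    (χ : G →* R) (f k : G → R) :
    ∑ g, (∑ h, f h * k (h⁻¹ * g)) * χ g = (∑ h, f h * χ h) * ∑ g, k g * χ g := by
  rw [sum_mul_sum]
  simp only [sum_mul]
  rw [sum_comm]
  refine sum_congr rfl fun h _ => (Fintype.sum_equiv (Equiv.mulLeft h) _ _ fun g => ?_).symm
  rw [coe_mulLeft, inv_mul_cancel_left, map_mul]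
  ring

section InvolutionWalk

variable {n : ℕ} {p : ℝ}

theorem stepP_of_cycleType_eq {σ : Perm (Fin n)} {s : ℕ}
    (hσ : σ.cycleType = Multiset.replicate s 2) :
    stepP n p σ = ((n / 2).choose s : ℝ) * p ^ (n / 2 - s) * (1 - p) ^ s * 2 ^ s *
      (s.factorial : ℝ) * ((n - 2 * s).factorial : ℝ) / (n.factorial : ℝ) := by
  obtain ⟨hsq, hcard⟩ := cycleType_eq_replicate_two_iff.mp hσ
  rw [stepP, if_pos hsq, hcard, Nat.mul_div_cancel_left s two_pos]

theorem sum_cycleType_eq_replicate_two_stepP_mul_signReal {s : ℕ} (hs : 2 * s ≤ n) :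
    ∑ σ : Perm (Fin n) with σ.cycleType = Multiset.replicate s 2,
      stepP n p σ * signReal (Fin n) σ = (n / 2).choose s * p ^ (n / 2 - s) * (p - 1) ^ s := by
  have hcount : (#({σ | σ.cycleType = Multiset.replicate s 2} : Finset (Perm (Fin n))) : ℝ) *
      (2 ^ s * s.factorial * (n - 2 * s).factorial) = n.factorial := by
    exact_mod_cast Fintype.card_fin n ▸ card_cycleType_eq_replicate_two_mul (by simpa using hs)
  rw [sum_congr rfl fun σ hσ => by
    rw [stepP_of_cycleType_eq (mem_filter.mp hσ).2, signReal_apply,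
      sign_of_cycleType_eq_replicate_two (mem_filter.mp hσ).2], sum_const, nsmul_eq_mul]
  push_cast
  calc _ = (n / 2).choose s * p ^ (n / 2 - s) * ((1 - p) ^ s * (-1) ^ s) *
        (#{σ : Perm (Fin n) | σ.cycleType = Multiset.replicate s 2} *
          (2 ^ s * s.factorial * (n - 2 * s).factorial)) / n.factorial := by ring
    _ = _ := by
      rw [hcount, mul_div_assoc, div_self (by positivity), mul_one, ← mul_pow,
        show (1 - p) * -1 = p - 1 by ring]

theorem sum_stepP_mul_signReal :
    ∑ σ, stepP n p σ * signReal (Fin n) σ = (2 * p - 1) ^ (n / 2) := by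
  rw [sum_eq_sum_cycleType_eq_replicate_two _ fun σ hσ => by rw [stepP, if_neg hσ, zero_mul],
    Fintype.card_fin, show 2 * p - 1 = (p - 1) + p by ring, add_pow]
  refine sum_congr rfl fun s hs => ?_
  rw [sum_cycleType_eq_replicate_two_stepP_mul_signReal
    (by have := mem_range_succ_iff.mp hs; omega)]
  ring

theorem sum_convPow_mul_monoidHom (χ : Perm (Fin n) →* ℝ) (t : ℕ) :
    ∑ g, convPow n p t g * χ g = (∑ σ, stepP n p σ * χ σ) ^ t := by
  induction t with
  | zero => simp [convPow]
  | succ t ih => rw [convPow, sum_convolution_mul_monoidHom, ih, pow_succ']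

end InvolutionWalk

theorem stmt2_general (n : ℕ) (hn : 0 < n) (hne : Even n) (p : ℝ)
    (t : ℕ) (hte : Even t) :
    tvDist n p t ≥ (1 / 2) * (1 - 2 * p) ^ (t * n / 2) := by
  have : Nontrivial (Fin n) := Fin.nontrivial_iff_two_le.mpr (by obtain ⟨m, rfl⟩ := hne; omega)
  have hsigned : ∑ g, (convPow n p t g - 1 / n.factorial) * signReal (Fin n) g =
      (1 - 2 * p) ^ (t * n / 2) := by
    simp only [sub_mul, sum_sub_distrib, ← mul_sum, sum_signReal, mul_zero, sub_zero,
      sum_convPow_mul_monoidHom, sum_stepP_mul_signReal, ← pow_mul]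
    rw [← neg_sub, (hte.mul_left _).neg_pow, Nat.mul_div_assoc t hne.two_dvd, mul_comm t]
  rw [tvDist, ge_iff_le, ← hsigned]
  refine mul_le_mul_of_nonneg_left ?_ (by norm_num)
  calc _ ≤ |∑ g, (convPow n p t g - 1 / n.factorial) * signReal (Fin n) g| := le_abs_self _
    _ ≤ _ := (abs_sum_le_sum_abs _ _).trans_eq (by simp only [abs_mul, abs_signReal, mul_one])

/-- Parity lower bound for the involution walk at even times. -/
theorem stmt2 (n : ℕ) (hn : 0 < n) (hne : Even n) (p : ℝ) (hp0 : 0 < p) (hp1 : p < 1)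
    (t : ℕ) (ht : 0 < t) (hte : Even t) :
    tvDist n p t ≥ (1 / 2) * (1 - 2 * p) ^ (t * n / 2) :=
  stmt2_general n hn hne p t hte
end

section
/- Let n be an even positive integer, 0 < p ≤ 1, and let i be an integer with 0 ≤ i ≤ n. Then Σ_{j₁ ≥ 0} Σ_{j₂ ≥ 0} ((1−p)/p)^{j₁+j₂} · M(n/2; j₁, j₂) · C(n − 2j₁ − 2j₂, i − 2j₂) = Σ_{j ≥ 0} 2^j · (1/p)^{n/2 − j} · M₃(n/2; j, (n−i−j)/2, (i−j)/2), where M(m; a, b) = m!/(a! b! (m−a−b)!) when a + b ≤ m (and 0 otherwise), C(a,b) is the ordinary binomial coefficient (0 when b < 0 or b > a), and M₃(m; a, b, c) = m!/(a! b! c!) when a, b, c are nonnegative integers with a + b + c = m (and 0 otherwise, in particular when (n−i−j)/2 or (i−j)/2 is not a nonnegative integer). -/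
open Finset

/-- `M(m; a, b) = m!/(a! b! (m−a−b)!)` when `a + b ≤ m`, and `0` otherwise. -/
noncomputable def Mcoef (m a b : ℕ) : ℝ :=
  if a + b ≤ m then
    (Nat.factorial m : ℝ) /
      ((Nat.factorial a : ℝ) * (Nat.factorial b : ℝ) * (Nat.factorial (m - a - b) : ℝ))
  else 0

/-- `M₃(m; a, b, c) = m!/(a! b! c!)` when `a, b, c` are nonnegative integers with
`a + b + c = m`, and `0` otherwise (in particular when some argument is not a
nonnegative integer). -/
noncomputable def M3 (m : ℕ) (a b c : ℚ) : ℝ :=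
  if 0 ≤ a ∧ 0 ≤ b ∧ 0 ≤ c ∧ a.den = 1 ∧ b.den = 1 ∧ c.den = 1 ∧ a + b + c = (m : ℚ) then
    (Nat.factorial m : ℝ) /
      ((Nat.factorial a.num.toNat : ℝ) * (Nat.factorial b.num.toNat : ℝ) *
        (Nat.factorial c.num.toNat : ℝ))
  else 0

/-- Ordinary binomial coefficient `C(a, b)` for integers, `0` when `b < 0` or `b > a`. -/
noncomputable def Cb (a b : ℤ) : ℝ :=
  if 0 ≤ b ∧ b ≤ a then ((a.toNat).choose b.toNat : ℝ) else 0

/-- Generalized binomial coefficient `C̃(m, r) = m(m−1)⋯(m−r+1)/r!` for integer `m`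
and integer `r ≥ 0`, and `0` for `r < 0`. -/
noncomputable def Cgen (m r : ℤ) : ℝ :=
  if 0 ≤ r then (∏ k ∈ Finset.range r.toNat, ((m : ℝ) - (k : ℝ))) / (Nat.factorial r.toNat : ℝ)
  else 0

/-!
With `q = (1 - p) / p`, so that `1 / p = 1 + q`, both sides are the coefficient of `X ^ i` in
`(q (1 + X²) + (1 + X)²) ^ (n / 2) = (2 X + (1 / p) (1 + X²)) ^ (n / 2)`: the left side is the
trinomial expansion in `q`, `q X²` and `(1 + X)²`, the right side the binomial expansion in `2 X`
and `(1 / p) (1 + X²)`.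
-/

open Polynomial
open scoped Nat

theorem Nat.choose_mul_choose_eq_zero {m a b : ℕ} (h : m < a + b) :
    m.choose a * (m - a).choose b = 0 := by
  rcases lt_or_ge m a with ha | ha
  · rw [Nat.choose_eq_zero_of_lt ha, zero_mul]
  · rw [Nat.choose_eq_zero_of_lt (by omega : m - a < b), mul_zero]

theorem Nat.cast_choose_mul_choose (K : Type*) [Semifield K] [CharZero K] {m a b : ℕ}
    (h : a + b ≤ m) :
    ((m.choose a * (m - a).choose b : ℕ) : K) = m ! / (a ! * b ! * (m - a - b)!) := by
  have hm := Nat.choose_mul_factorial_mul_factorial (Nat.le_of_add_right_le h)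
  have hma := Nat.choose_mul_factorial_mul_factorial (n := m - a) (k := b) (by omega)
  rw [eq_div_iff (by simp [Nat.factorial_ne_zero]), ← hm, ← hma]
  push_cast
  ring

theorem add_add_pow_eq_sum_sum {R : Type*} [CommSemiring R] (a b c : R) (m : ℕ) :
    (a + b + c) ^ m = ∑ j1 ∈ range (m + 1), ∑ j2 ∈ range (m + 1),
      a ^ j1 * b ^ j2 * c ^ (m - j1 - j2) * (m.choose j1 * (m - j1).choose j2 : ℕ) := by
  rw [add_assoc, add_pow]
  refine sum_congr rfl fun j1 _ => ?_
  rw [add_pow, mul_sum, sum_mul]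
  refine sum_subset (range_subset_range.2 (by omega)) (fun j2 _ hj2 => ?_) |>.trans
    (sum_congr rfl fun j2 _ => ?_)
  · rw [Nat.choose_eq_zero_of_lt (by simp only [mem_range] at hj2; omega)]
    simp
  · push_cast
    ring

theorem coeff_one_add_X_sq_pow (R : Type*) [CommSemiring R] (N d : ℕ) :
    ((1 + X ^ 2 : R[X]) ^ N).coeff d = if 2 ∣ d then (N.choose (d / 2) : R) else 0 := by
  rw [show (1 + X ^ 2 : R[X]) ^ N = expand R 2 ((1 + X) ^ N) by simp, coeff_expand two_pos,
    coeff_one_add_X_pow]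

theorem coeff_C_mul_X_add_C_mul_one_add_X_sq_pow {R : Type*} [CommSemiring R] (u r : R)
    (m i : ℕ) :
    ((C u * X + C r * (1 + X ^ 2)) ^ m).coeff i = ∑ j ∈ range (m + 1),
      u ^ j * r ^ (m - j) * m.choose j *
        if j ≤ i ∧ 2 ∣ i - j then ((m - j).choose ((i - j) / 2) : R) else 0 := by
  rw [add_pow, finsetSum_coeff]
  refine sum_congr rfl fun j _ => ?_
  rw [show (C u * X) ^ j * (C r * (1 + X ^ 2)) ^ (m - j) * (m.choose j : R[X])
      = C (u ^ j * r ^ (m - j) * m.choose j) * ((1 + X ^ 2) ^ (m - j) * X ^ j) by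
    simp only [mul_pow, map_mul, map_pow, map_natCast]; ring,
    coeff_C_mul, coeff_mul_X_pow', coeff_one_add_X_sq_pow]
  by_cases hj : j ≤ i <;> simp [hj]

theorem coeff_C_add_C_mul_X_sq_add_one_add_X_sq_pow {R : Type*} [CommSemiring R] (q : R)
    (m i : ℕ) :
    ((C q + C q * X ^ 2 + (1 + X) ^ 2) ^ m).coeff i
      = ∑ j1 ∈ range (m + 1), ∑ j2 ∈ range (m + 1),
        q ^ (j1 + j2) * (m.choose j1 * (m - j1).choose j2 : ℕ) *
          if 2 * j2 ≤ i then ((2 * (m - j1 - j2)).choose (i - 2 * j2) : R) else 0 := by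
  rw [add_add_pow_eq_sum_sum, finsetSum_coeff]
  refine sum_congr rfl fun j1 _ => ?_
  rw [finsetSum_coeff]
  refine sum_congr rfl fun j2 _ => ?_
  rw [show C q ^ j1 * (C q * X ^ 2) ^ j2 * ((1 + X) ^ 2) ^ (m - j1 - j2)
        * ((m.choose j1 * (m - j1).choose j2 : ℕ) : R[X])
      = C (q ^ (j1 + j2) * (m.choose j1 * (m - j1).choose j2 : ℕ))
        * (X ^ (2 * j2) * (1 + X) ^ (2 * (m - j1 - j2))) by
    simp only [mul_pow, map_mul, map_pow, map_natCast, ← pow_mul]; ring,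
    coeff_C_mul, coeff_X_pow_mul', coeff_one_add_X_pow]

theorem Mcoef_eq_choose_mul_choose (m a b : ℕ) :
    Mcoef m a b = (m.choose a * (m - a).choose b : ℕ) := by
  unfold Mcoef
  split_ifs with h
  · exact (Nat.cast_choose_mul_choose ℝ h).symm
  · rw [Nat.choose_mul_choose_eq_zero (by omega), Nat.cast_zero]

theorem Cb_natCast (a b : ℕ) : Cb a b = a.choose b := by
  unfold Cb
  split_ifs with h
  · simp
  · rw [Nat.choose_eq_zero_of_lt (by omega), Nat.cast_zero]

theorem Cb_of_neg (a : ℤ) {b : ℤ} (hb : b < 0) : Cb a b = 0 :=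
  if_neg fun h => hb.not_ge h.1

theorem Cb_two_mul_sub_sub {m j1 j2 : ℕ} (i : ℕ) (h : j1 + j2 ≤ m) :
    Cb (2 * m - 2 * j1 - 2 * j2) (i - 2 * j2)
      = if 2 * j2 ≤ i then ((2 * (m - j1 - j2)).choose (i - 2 * j2) : ℝ) else 0 := by
  split_ifs with hi
  · rw [show (2 * m - 2 * j1 - 2 * j2 : ℤ) = ((2 * (m - j1 - j2) : ℕ) : ℤ) by omega,
      show (i - 2 * j2 : ℤ) = ((i - 2 * j2 : ℕ) : ℤ) by omega, Cb_natCast]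
  · exact Cb_of_neg _ (by omega)

theorem M3_natCast_sub_sub (m a t : ℕ) :
    M3 m a ((m : ℚ) - a - t) t = (m.choose a * (m - a).choose t : ℕ) := by
  by_cases h : a + t ≤ m
  · have hs : (m : ℚ) - a - t = ((m - a - t : ℕ) : ℚ) := by push_cast [Nat.sub_sub, h]; ring
    rw [hs, M3, if_pos ⟨by positivity, by positivity, by positivity, Rat.den_natCast _,
      Rat.den_natCast _, Rat.den_natCast _, by push_cast [Nat.sub_sub, h]; ring⟩]
    simp only [Rat.num_natCast, Int.toNat_natCast]
    rw [mul_right_comm, Nat.cast_choose_mul_choose ℝ h]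
  · rw [M3, if_neg, Nat.choose_mul_choose_eq_zero (by omega), Nat.cast_zero]
    rintro ⟨-, hs, -⟩
    have : (m : ℚ) < a + t := by exact_mod_cast (by omega : m < a + t)
    linarith

theorem M3_of_neg_right (m : ℕ) (a b : ℚ) {c : ℚ} (hc : c < 0) : M3 m a b c = 0 :=
  if_neg fun h => hc.not_ge h.2.2.1

theorem M3_of_den_ne_one_right (m : ℕ) (a b : ℚ) {c : ℚ} (hc : c.den ≠ 1) : M3 m a b c = 0 :=
  if_neg fun h => hc h.2.2.2.2.2.1

theorem M3_eq_choose_mul_ite (m i j : ℕ) :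
    M3 m j ((2 * m - i - j) / 2) ((i - j) / 2)
      = m.choose j * if j ≤ i ∧ 2 ∣ i - j then ((m - j).choose ((i - j) / 2) : ℝ) else 0 := by
  split_ifs with h
  · obtain ⟨hji, t, ht⟩ := h
    have hc : ((i : ℚ) - j) / 2 = t := by
      rw [← Nat.cast_sub hji, ht]
      push_cast
      ring
    rw [show ((2 * m : ℚ) - i - j) / 2 = m - j - (i - j) / 2 by ring, hc, M3_natCast_sub_sub, ht,
      Nat.mul_div_cancel_left t two_pos, Nat.cast_mul]
  · rw [mul_zero]
    rcases not_and_or.1 h with hji | hodd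
    · refine M3_of_neg_right _ _ _ ?_
      have : (i : ℚ) < j := by exact_mod_cast (by omega : i < j)
      linarith
    · refine M3_of_den_ne_one_right _ _ _ fun hden => hodd ?_
      have hnum := (Rat.den_eq_one_iff _).1 hden
      have : (i : ℤ) - j = 2 * (((i : ℚ) - j) / 2).num := by
        exact_mod_cast (by rw [hnum]; ring : (i : ℚ) - j = 2 * ((((i : ℚ) - j) / 2).num : ℚ))
      omega

theorem sum_Mcoef_mul_Cb_eq_coeff (q : ℝ) (m i : ℕ) :
    ∑ j1 ∈ range (m + 1), ∑ j2 ∈ range (m + 1),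
        q ^ (j1 + j2) * Mcoef m j1 j2 * Cb (2 * m - 2 * j1 - 2 * j2) (i - 2 * j2)
      = ((C q + C q * X ^ 2 + (1 + X) ^ 2) ^ m).coeff i := by
  rw [coeff_C_add_C_mul_X_sq_add_one_add_X_sq_pow]
  refine sum_congr rfl fun j1 _ => sum_congr rfl fun j2 _ => ?_
  rw [Mcoef_eq_choose_mul_choose]
  rcases le_or_gt (j1 + j2) m with h | h
  · rw [Cb_two_mul_sub_sub i h]
  · rw [Nat.choose_mul_choose_eq_zero h]
    simp

theorem sum_M3_eq_coeff (r : ℝ) (m i : ℕ) :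
    ∑ j ∈ range (m + 1), (2 : ℝ) ^ j * r ^ (m - j) * M3 m j ((2 * m - i - j) / 2) ((i - j) / 2)
      = ((C 2 * X + C r * (1 + X ^ 2)) ^ m).coeff i := by
  rw [coeff_C_mul_X_add_C_mul_one_add_X_sq_pow]
  refine sum_congr rfl fun j _ => ?_
  rw [M3_eq_choose_mul_ite]
  ring

/-- All terms with `j₁ + j₂ > n/2` (resp. `j > n/2`) vanish, so the finite ranges capture the
full sums. -/
theorem stmt10_general (n : ℕ) (hne : Even n) (p : ℝ) (hp0 : 0 < p) (i : ℕ) :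
    ∑ j1 ∈ Finset.range (n / 2 + 1), ∑ j2 ∈ Finset.range (n / 2 + 1),
        ((1 - p) / p) ^ (j1 + j2) * Mcoef (n / 2) j1 j2 *
          Cb ((n : ℤ) - 2 * j1 - 2 * j2) ((i : ℤ) - 2 * j2)
      = ∑ j ∈ Finset.range (n / 2 + 1),
          (2 : ℝ) ^ j * (1 / p) ^ (n / 2 - j) *
            M3 (n / 2) (j : ℚ) (((n : ℚ) - i - j) / 2) (((i : ℚ) - j) / 2) := by
  obtain ⟨m, rfl⟩ := hne.two_dvd
  have hr : 1 / p = 1 + (1 - p) / p := by field_simp; ring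
  have hpoly : (C ((1 - p) / p) + C ((1 - p) / p) * X ^ 2 + (1 + X) ^ 2 : ℝ[X])
      = C 2 * X + C (1 / p) * (1 + X ^ 2) := by
    rw [hr, C_add, C_1, C_ofNat]
    ring
  rw [Nat.mul_div_cancel_left m two_pos]
  push_cast
  rw [sum_Mcoef_mul_Cb_eq_coeff, hpoly, sum_M3_eq_coeff]

/-- The combinatorial identity of Proposition `SEAWORLD`: both sides count with
weights the distributions of a perfect matching of `{1,…,n}` between a part of
size `i` and a part of size `n−i`.  All terms with `j₁ + j₂ > n/2` (resp.
`j > n/2`) vanish, so the finite ranges capture the full sums. -/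
theorem stmt10 (n : ℕ) (hn : 0 < n) (hne : Even n) (p : ℝ) (hp0 : 0 < p) (hp1 : p ≤ 1)
    (i : ℕ) (hi : i ≤ n) :
    ∑ j1 ∈ Finset.range (n / 2 + 1), ∑ j2 ∈ Finset.range (n / 2 + 1),
        ((1 - p) / p) ^ (j1 + j2) * Mcoef (n / 2) j1 j2 *
          Cb ((n : ℤ) - 2 * j1 - 2 * j2) ((i : ℤ) - 2 * j2)
      = ∑ j ∈ Finset.range (n / 2 + 1),
          (2 : ℝ) ^ j * (1 / p) ^ (n / 2 - j) *
            M3 (n / 2) (j : ℚ) (((n : ℚ) - i - j) / 2) (((i : ℚ) - j) / 2) :=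
  stmt10_general n hne p hp0 i
end

section
/- Let n be an even positive integer, 0 < p ≤ 1, and let i be an integer with 2 ≤ i ≤ n/2 such that i ≤ p·√(n − 2i + 2) (so that i(i−1) < 2p²(n−2i+2)). Then Σ_{0 ≤ j ≤ i, i − j even} (2p)^j · M₃(n/2; j, (n−i−j)/2, (i−j)/2) ≤ (1/(1 − i(i−1)/(2p²(n−2i+2)))) · (2p)^i · C(n/2, i), where M₃(m; a, b, c) = m!/(a! b! c!) when a, b, c are nonnegative integers with a + b + c = m (and 0 otherwise) and C(a,b) is the ordinary binomial coefficient. -/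
open Finset

lemma M3_natCast (m a b c : ℕ) (h : a + b + c = m) :
    M3 m (a:ℚ) (b:ℚ) (c:ℚ)
      = (m.factorial : ℝ) / ((a.factorial :ℝ) * (b.factorial:ℝ) * (c.factorial:ℝ)) := by
  unfold M3
  rw [if_pos]
  · simp
  · refine ⟨by positivity, by positivity, by positivity, by simp, by simp, by simp, ?_⟩
    exact_mod_cast congrArg (Nat.cast : ℕ → ℚ) h

set_option maxHeartbeats 1000000 in
/-- For `i` small relative to `√n`, the `j = i` term dominates the weighted
multinomial sum (Proposition `invismall`). -/
theorem stmt11 (n : ℕ) (hn : 0 < n) (hne : Even n) (p : ℝ) (hp0 : 0 < p) (hp1 : p ≤ 1)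
    (i : ℕ) (hi2 : 2 ≤ i) (hin : i ≤ n / 2)
    (hip : (i : ℝ) ≤ p * Real.sqrt ((n : ℝ) - 2 * i + 2)) :
    ∑ j ∈ (Finset.range (i + 1)).filter (fun j => (i - j) % 2 = 0),
        (2 * p) ^ j * M3 (n / 2) (j : ℚ) (((n : ℚ) - i - j) / 2) (((i : ℚ) - j) / 2)
      ≤ (1 / (1 - (i : ℝ) * ((i : ℝ) - 1) / (2 * p ^ 2 * ((n : ℝ) - 2 * i + 2)))) *
          (2 * p) ^ i * ((n / 2).choose i : ℝ) := by
  set m := n / 2 with hm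
  have hnm : n = 2 * m := by
    obtain ⟨t, ht⟩ := hne; omega
  have him : i ≤ m := hin
  have h2in : 2 * i ≤ n := by omega
  have hb : (0:ℝ) < (n:ℝ) - 2*i + 2 := by
    have : ((2*i : ℕ):ℝ) ≤ (n:ℝ) := Nat.cast_le.mpr h2in
    push_cast at this; linarith
  have hsq : (i:ℝ)^2 ≤ p^2 * ((n:ℝ) - 2*i + 2) := by
    have h1 : (0:ℝ) ≤ (i:ℝ) := Nat.cast_nonneg i
    have h2 := Real.sq_sqrt hb.le
    nlinarith [Real.sqrt_nonneg ((n:ℝ) - 2*i + 2)]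
  have hi1 : (1:ℝ) ≤ (i:ℝ) := by exact_mod_cast Nat.one_le_iff_ne_zero.mpr (by omega)
  set r : ℝ := (i : ℝ) * ((i : ℝ) - 1) / (2 * p ^ 2 * ((n : ℝ) - 2 * i + 2)) with hr
  have hD : (0:ℝ) < 2 * p ^ 2 * ((n:ℝ) - 2*i + 2) := by positivity
  have hr0 : 0 ≤ r := by
    apply div_nonneg _ hD.le
    nlinarith
  have hr1 : r < 1/2 := by
    rw [hr, div_lt_iff₀ hD]
    nlinarith
  have hDm : (n:ℝ) - 2*i + 2 = 2 * (((m:ℝ) - i) + 1) := by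
    have : (n:ℝ) = 2*m := by exact_mod_cast hnm
    rw [this]; ring
  have hmiR : ((m - i : ℕ):ℝ) = (m:ℝ) - (i:ℝ) := by
    push_cast [him]; ring
  set T : ℕ → ℝ := fun k => (2*p)^(i - 2*k) * (m.factorial : ℝ) /
      (((i - 2*k).factorial : ℝ) * ((m - i + k).factorial : ℝ) * (k.factorial : ℝ)) with hT
  have hT0 : ∀ k, 0 ≤ T k := by
    intro k; rw [hT]; positivity
  have hsum : ∑ j ∈ (Finset.range (i + 1)).filter (fun j => (i - j) % 2 = 0),
        (2 * p) ^ j * M3 m (j : ℚ) (((n : ℚ) - i - j) / 2) (((i : ℚ) - j) / 2)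
      = ∑ k ∈ Finset.range (i/2 + 1), T k := by
    refine Finset.sum_nbij' (fun j => (i - j)/2) (fun k => i - 2*k) ?_ ?_ ?_ ?_ ?_
    · intro j hj
      simp only [mem_filter, mem_range] at hj ⊢
      omega
    · intro k hk
      simp only [mem_filter, mem_range] at hk ⊢
      omega
    · intro j hj
      simp only [mem_filter, mem_range] at hj
      show i - 2 * ((i - j)/2) = j
      omega
    · intro k hk
      simp only [mem_filter, mem_range] at hk
      show (i - (i - 2*k))/2 = k
      omega
    · intro j hj
      simp only [mem_filter, mem_range] at hj
      show (2 * p) ^ j * M3 m (j : ℚ) (((n : ℚ) - i - j) / 2) (((i : ℚ) - j) / 2)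
        = T ((i - j)/2)
      set k := (i - j)/2 with hk
      have hij : i = j + 2*k := by omega
      have e1 : ((i:ℚ) - j)/2 = ((k:ℕ):ℚ) := by
        have : (i:ℚ) = (j:ℚ) + 2*k := by exact_mod_cast congrArg (Nat.cast : ℕ → ℚ) hij
        rw [this]; ring
      have e2 : ((n:ℚ) - i - j)/2 = (((m - i + k : ℕ)):ℚ) := by
        have h1 : (n:ℚ) = 2*(m:ℚ) := by exact_mod_cast congrArg (Nat.cast : ℕ → ℚ) hnm
        have h2 : (((m - i + k : ℕ)):ℚ) = (m:ℚ) - i + k := by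
          push_cast [him]; ring
        have h3 : (i:ℚ) = (j:ℚ) + 2*k := by exact_mod_cast congrArg (Nat.cast : ℕ → ℚ) hij
        rw [h1, h2, h3]; ring
      rw [e1, e2, M3_natCast m j (m - i + k) k (by omega)]
      rw [hT]
      have e3 : i - 2*k = j := by omega
      simp only [e3]
      rw [mul_div_assoc]
  have hstep : ∀ k, 2*(k+1) ≤ i → T (k+1) ≤ r * T k := by
    intro k hki
    set a := i - 2*k - 2 with ha
    set b := m - i + k with hbk
    have ea1 : i - 2*(k+1) = a := by omega
    have ea2 : i - 2*k = a + 2 := by omega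
    have eb1 : m - i + (k+1) = b + 1 := by omega
    have heq : T (k+1) = T k * ((((a:ℝ)+2)*((a:ℝ)+1)) / (4*p^2*((b:ℝ)+1)*((k:ℝ)+1))) := by
      rw [hT]
      simp only [ea1, ea2, eb1]
      have f1 : (((a+2).factorial : ℕ) : ℝ) = ((a:ℝ)+2)*((a:ℝ)+1)*(a.factorial : ℝ) := by
        rw [Nat.factorial_succ, Nat.factorial_succ]; push_cast; ring
      have f2 : (((b+1).factorial : ℕ) : ℝ) = ((b:ℝ)+1)*(b.factorial : ℝ) := by
        rw [Nat.factorial_succ]; push_cast; ring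
      have f3 : (((k+1).factorial : ℕ) : ℝ) = ((k:ℝ)+1)*(k.factorial : ℝ) := by
        rw [Nat.factorial_succ]; push_cast; ring
      rw [f1, f2, f3]
      have hfa : ((a.factorial : ℕ):ℝ) ≠ 0 := by positivity
      have hfb : ((b.factorial : ℕ):ℝ) ≠ 0 := by positivity
      have hfk : ((k.factorial : ℕ):ℝ) ≠ 0 := by positivity
      have hp' : p ≠ 0 := ne_of_gt hp0
      rw [pow_add]
      field_simp
      ring
    have hq : (((a:ℝ)+2)*((a:ℝ)+1)) / (4*p^2*((b:ℝ)+1)*((k:ℝ)+1)) ≤ r := by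
      rw [hr, div_le_div_iff₀ (by positivity) hD]
      have hnat : ((m - i) + 1) * ((a+2)*(a+1)) ≤ (i*(i-1)) * ((b+1)*(k+1)) := by
        have h1 : a + 2 ≤ i := by omega
        have h2 : a + 1 ≤ i - 1 := by omega
        have h3 : (m - i) + 1 ≤ b + 1 := by omega
        calc (m - i + 1) * ((a+2)*(a+1)) ≤ (b+1) * (i * (i-1)) :=
              Nat.mul_le_mul h3 (Nat.mul_le_mul h1 h2)
          _ = (i*(i-1)) * ((b+1)*1) := by ring
          _ ≤ (i*(i-1)) * ((b+1)*(k+1)) :=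
              Nat.mul_le_mul_left _ (Nat.mul_le_mul_left _ (by omega))
      have hnatR : (((m - i : ℕ):ℝ) + 1) * (((a:ℝ)+2)*((a:ℝ)+1))
          ≤ ((i:ℝ)*(((i - 1 : ℕ)):ℝ)) * (((b:ℝ)+1)*((k:ℝ)+1)) := by
        exact_mod_cast hnat
      have hi1' : ((i - 1 : ℕ):ℝ) = (i:ℝ) - 1 := by
        push_cast [(by omega : 1 ≤ i)]; ring
      rw [hmiR, hi1'] at hnatR
      rw [hDm]
      nlinarith [mul_le_mul_of_nonneg_left hnatR (by positivity : (0:ℝ) ≤ 4*p^2)]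
    calc T (k+1) = T k * _ := heq
      _ ≤ T k * r := mul_le_mul_of_nonneg_left hq (hT0 k)
      _ = r * T k := mul_comm _ _
  have hgeo : ∀ k, 2*k ≤ i → T k ≤ r^k * T 0 := by
    intro k
    induction k with
    | zero => intro _; simp
    | succ k ih =>
      intro h
      have h2 : 2*k ≤ i := by omega
      calc T (k+1) ≤ r * T k := hstep k h
        _ ≤ r * (r^k * T 0) := mul_le_mul_of_nonneg_left (ih h2) hr0
        _ = r^(k+1) * T 0 := by ring
  have hT0val : T 0 = (2*p)^i * ((m.choose i : ℕ):ℝ) := by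
    rw [hT]
    simp only [Nat.mul_zero, Nat.sub_zero, Nat.add_zero, Nat.factorial_zero, Nat.cast_one, mul_one]
    rw [Nat.cast_choose ℝ him]
    rw [mul_div_assoc]
  have hrlt1 : r < 1 := by linarith
  have hgsum : ∑ k ∈ Finset.range (i/2 + 1), r^k ≤ 1/(1-r) := by
    rw [geom_sum_eq (ne_of_lt hrlt1) (i/2+1)]
    have h1r : (0:ℝ) < 1 - r := by linarith
    have e : (r^(i/2+1) - 1)/(r - 1) = (1 - r^(i/2+1))/(1 - r) := by
      rw [div_eq_div_iff (by linarith) (by linarith)]; ring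
    rw [e]
    gcongr
    nlinarith [pow_nonneg hr0 (i/2+1)]
  calc ∑ j ∈ (Finset.range (i + 1)).filter (fun j => (i - j) % 2 = 0),
        (2 * p) ^ j * M3 m (j : ℚ) (((n : ℚ) - i - j) / 2) (((i : ℚ) - j) / 2)
      = ∑ k ∈ Finset.range (i/2 + 1), T k := hsum
    _ ≤ ∑ k ∈ Finset.range (i/2 + 1), r^k * T 0 := by
        refine Finset.sum_le_sum fun k hk => hgeo k ?_
        have := Finset.mem_range.mp hk
        omega
    _ = (∑ k ∈ Finset.range (i/2 + 1), r^k) * T 0 := by rw [← Finset.sum_mul]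
    _ ≤ (1/(1-r)) * T 0 := mul_le_mul_of_nonneg_right hgsum (hT0 0)
    _ = (1/(1-r)) * (2*p)^i * ((m.choose i : ℕ):ℝ) := by rw [hT0val]; ring
end

section
/- Let n and i be positive integers with 2i ≤ n. Let μ₁ ≥ μ₂ ≥ ⋯ ≥ μ_{n−i} ≥ 0 be nonnegative integers with Σ_{k=1}^{n−i} μ_k = i. Then ∏_{k=1}^{n−i} (n − i − k + 1 + μ_k)/(n − i − k + 1) ≤ (n − i + 1)/(n − 2i + 1), with equality when μ_k = 1 for 1 ≤ k ≤ i and μ_k = 0 for k > i. -/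
open Finset

private lemma tele (a : ℕ) (b : ℝ) (hb : 0 < b) :
    ∏ t ∈ Finset.range a, ((b + t + 1) / (b + t)) = (b + a) / b := by
  induction a with
  | zero => simp [div_self hb.ne']
  | succ a ih =>
    rw [Finset.prod_range_succ, ih]
    have h1 : (0:ℝ) < b + a := by positivity
    push_cast
    field_simp
    ring

private lemma prod_Icc_one (c : ℕ) (f : ℕ → ℝ) :
    ∏ k ∈ Finset.Icc 1 c, f k = ∏ t ∈ Finset.range c, f (1 + t) := by
  rw [← Finset.Ico_add_one_right_eq_Icc, Finset.prod_Ico_eq_prod_range]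
  simp

private lemma down_closed_eq_Icc (m : ℕ) (S : Finset ℕ) (hS : S ⊆ Finset.Icc 1 m)
    (hdc : ∀ a ∈ S, ∀ b, 1 ≤ b → b ≤ a → b ∈ S) : S = Finset.Icc 1 S.card := by
  have hsub : Finset.Icc 1 S.card ⊆ S := by
    intro b hb
    simp only [Finset.mem_Icc] at hb
    obtain ⟨hb1, hb2⟩ := hb
    by_contra hbS
    have hS' : S ⊆ Finset.Ico 1 b := by
      intro a ha
      have h1 := hS ha
      simp only [Finset.mem_Icc] at h1
      simp only [Finset.mem_Ico]
      refine ⟨h1.1, ?_⟩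
      by_contra hab
      exact hbS (hdc a ha b hb1 (by omega))
    have hc := Finset.card_le_card hS'
    rw [Nat.card_Ico] at hc
    omega
  exact (Finset.eq_of_subset_of_card_le hsub (by simp [Nat.card_Icc])).symm

private lemma colprod_le (m : ℕ) : ∀ (r : ℕ) (c : ℕ → ℕ) (s : ℕ),
    (∑ j ∈ Finset.Icc 1 r, c j = s) → s ≤ m →
    ∏ j ∈ Finset.Icc 1 r, (((m:ℝ) + j) / ((m:ℝ) + j - c j))
      ≤ ((m:ℝ) + 1) / ((m:ℝ) + 1 - s) := by
  intro r
  induction r with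
  | zero =>
    intro c s hs hsm
    rw [show Finset.Icc 1 0 = (∅ : Finset ℕ) from by simp] at hs ⊢
    simp only [Finset.sum_empty] at hs
    subst hs
    rw [Finset.prod_empty, Nat.cast_zero, sub_zero,
      div_self (by positivity : (0:ℝ) < (m:ℝ)+1).ne']
  | succ r ih =>
    intro c s hs hsm
    rw [Finset.prod_Icc_succ_top (by omega)]
    rw [Finset.sum_Icc_succ_top (by omega)] at hs
    set s' := ∑ j ∈ Finset.Icc 1 r, c j with hs'def
    have hcs : c (r+1) ≤ s := by omega
    have hs's : s' ≤ s := by omega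
    have hs'm : s' ≤ m := le_trans hs's hsm
    have hcm : c (r+1) ≤ m := le_trans hcs hsm
    have hsmR : (s:ℝ) ≤ m := by exact_mod_cast hsm
    have hs'mR : (s':ℝ) ≤ m := by exact_mod_cast hs'm
    have hcmR : ((c (r+1)):ℝ) ≤ m := by exact_mod_cast hcm
    have hsR : (s:ℝ) = (s':ℝ) + c (r+1) := by exact_mod_cast hs.symm
    have h1 : (0:ℝ) < (m:ℝ) + 1 - s' := by linarith
    have h2 : (0:ℝ) < (m:ℝ) + ((r:ℝ)+1) - c (r+1) := by
      have : (0:ℝ) ≤ (r:ℝ) := Nat.cast_nonneg r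
      linarith
    have h3 : (0:ℝ) < (m:ℝ) + 1 - s := by linarith
    have IH := ih c s' rfl hs'm
    have hF : (0:ℝ) < ((m:ℝ) + ((r:ℝ)+1)) / ((m:ℝ) + ((r:ℝ)+1) - c (r+1)) := by
      apply div_pos _ h2
      have hr0 : (0:ℝ) ≤ (r:ℝ) := Nat.cast_nonneg r
      have hm0 : (0:ℝ) ≤ (m:ℝ) := Nat.cast_nonneg m
      linarith
    have step1 : (∏ j ∈ Finset.Icc 1 r, (((m:ℝ) + j) / ((m:ℝ) + j - c j)))
        * (((m:ℝ) + ((r:ℝ)+1)) / ((m:ℝ) + ((r:ℝ)+1) - c (r+1)))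
        ≤ (((m:ℝ) + 1) / ((m:ℝ) + 1 - s'))
        * (((m:ℝ) + ((r:ℝ)+1)) / ((m:ℝ) + ((r:ℝ)+1) - c (r+1))) :=
      mul_le_mul_of_nonneg_right IH (le_of_lt hF)
    have step2 : (((m:ℝ) + 1) / ((m:ℝ) + 1 - s'))
        * (((m:ℝ) + ((r:ℝ)+1)) / ((m:ℝ) + ((r:ℝ)+1) - c (r+1)))
        ≤ ((m:ℝ) + 1) / ((m:ℝ) + 1 - s) := by
      rw [div_mul_div_comm, div_le_div_iff₀ (by positivity) h3, hsR]
      have hC : (0:ℝ) ≤ (c (r+1) : ℝ) := Nat.cast_nonneg _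
      have hS' : (0:ℝ) ≤ (s':ℝ) := Nat.cast_nonneg _
      have hR : (0:ℝ) ≤ (r:ℝ) := Nat.cast_nonneg _
      have hM : (0:ℝ) ≤ (m:ℝ) := Nat.cast_nonneg _
      nlinarith [mul_nonneg (mul_nonneg (by linarith : (0:ℝ) ≤ (m:ℝ)+1) hC) (add_nonneg hS' hR)]
    calc (∏ j ∈ Finset.Icc 1 r, (((m:ℝ) + j) / ((m:ℝ) + j - c j)))
        * (((m:ℝ) + (↑(r+1):ℝ)) / ((m:ℝ) + (↑(r+1):ℝ) - c (r+1)))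
        = (∏ j ∈ Finset.Icc 1 r, (((m:ℝ) + j) / ((m:ℝ) + j - c j)))
        * (((m:ℝ) + ((r:ℝ)+1)) / ((m:ℝ) + ((r:ℝ)+1) - c (r+1))) := by push_cast; ring_nf
      _ ≤ (((m:ℝ) + 1) / ((m:ℝ) + 1 - s'))
        * (((m:ℝ) + ((r:ℝ)+1)) / ((m:ℝ) + ((r:ℝ)+1) - c (r+1))) := step1
      _ ≤ ((m:ℝ) + 1) / ((m:ℝ) + 1 - s) := step2

private lemma coltele (m j c : ℕ) (hj : 1 ≤ j) (hc : c ≤ m) :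
    ∏ k ∈ Finset.Icc 1 c, (((m:ℝ) - k + j + 1) / ((m:ℝ) - k + j))
      = ((m:ℝ) + j) / ((m:ℝ) + j - c) := by
  have hcR : (c:ℝ) ≤ m := by exact_mod_cast hc
  have hjR : (1:ℝ) ≤ (j:ℝ) := by exact_mod_cast hj
  have hb : (0:ℝ) < (m:ℝ) + j - c := by linarith
  rw [prod_Icc_one]
  rw [← Finset.prod_range_reflect]
  have ht := tele c ((m:ℝ) + j - c) hb
  rw [show ((m:ℝ) + j) / ((m:ℝ) + j - c) = (((m:ℝ) + j - c) + c) / ((m:ℝ) + j - c) from by ring_nf,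
    ← ht]
  apply Finset.prod_congr rfl
  intro t htm
  simp only [Finset.mem_range] at htm
  rw [show (1 + (c - 1 - t) : ℕ) = c - t from by omega,
    Nat.cast_sub (by omega : t ≤ c)]
  ring

/-- The hook-length optimization: among weakly decreasing nonnegative integer
sequences `μ₁ ≥ ⋯ ≥ μ_{n−i}` summing to `i`, the product
`∏_{k=1}^{n−i} (n−i−k+1+μ_k)/(n−i−k+1)` is at most `(n−i+1)/(n−2i+1)`, with
equality when `μ_k = 1` for `1 ≤ k ≤ i` and `μ_k = 0` for `k > i`. -/
theorem stmt14 (n i : ℕ) (hn : 0 < n) (hi : 0 < i) (h2i : 2 * i ≤ n)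
    (μ : ℕ → ℕ)
    (hmono : ∀ k, 1 ≤ k → k + 1 ≤ n - i → μ (k + 1) ≤ μ k)
    (hsum : ∑ k ∈ Finset.Icc 1 (n - i), μ k = i) :
    (∏ k ∈ Finset.Icc 1 (n - i),
        (((n : ℝ) - i - k + 1 + μ k) / ((n : ℝ) - i - k + 1))
      ≤ ((n : ℝ) - i + 1) / ((n : ℝ) - 2 * i + 1)) ∧
    ((∀ k, 1 ≤ k → k ≤ i → μ k = 1) → (∀ k, i < k → μ k = 0) →
      ∏ k ∈ Finset.Icc 1 (n - i),
          (((n : ℝ) - i - k + 1 + μ k) / ((n : ℝ) - i - k + 1))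
        = ((n : ℝ) - i + 1) / ((n : ℝ) - 2 * i + 1)) := by
  have him : i ≤ n - i := by omega
  set m := n - i with hmdef
  have hm1 : 1 ≤ m := by omega
  have hiR : (i:ℝ) ≤ m := by exact_mod_cast him
  have hni : (n:ℝ) - i = (m:ℝ) := by
    have h : m + i = n := by omega
    have h2 := congrArg (Nat.cast (R := ℝ)) h
    push_cast at h2
    linarith
  have hrhs : ((n:ℝ) - i + 1) / ((n:ℝ) - 2*i + 1) = ((m:ℝ)+1) / ((m:ℝ)+1 - i) := by
    rw [show (n:ℝ) - 2*i + 1 = ((n:ℝ) - i) - i + 1 from by ring, hni]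
    ring_nf
  have hfac : ∀ k ∈ Finset.Icc 1 m, ((n:ℝ) - i - k + 1 + μ k)/((n:ℝ) - i - k + 1)
      = ((m:ℝ) - k + 1 + μ k)/((m:ℝ) - k + 1) := by
    intro k _; rw [hni]
  have hbk : ∀ k ∈ Finset.Icc 1 m, (0:ℝ) < (m:ℝ) - k + 1 := by
    intro k hk
    simp only [Finset.mem_Icc] at hk
    have : (k:ℝ) ≤ m := by exact_mod_cast hk.2
    linarith
  constructor
  · -- inequality
    rw [Finset.prod_congr rfl hfac, hrhs]
    set S : ℕ → Finset ℕ := fun j => (Finset.Icc 1 m).filter (fun k => j ≤ μ k) with hS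
    set c : ℕ → ℕ := fun j => (S j).card with hc
    have hanti : ∀ a, a ≤ m → ∀ b, 1 ≤ b → b ≤ a → μ a ≤ μ b := by
      intro a
      induction a with
      | zero => intro _ b _ h; omega
      | succ a iha =>
        intro ham b hb hba
        rcases Nat.lt_or_ge b (a+1) with h | h
        · exact le_trans (hmono a (by omega) (by omega)) (iha (by omega) b hb (by omega))
        · have hh : b = a + 1 := by omega
          rw [hh]
    have hmui : ∀ k ∈ Finset.Icc 1 m, μ k ≤ i := by
      intro k hk
      calc μ k ≤ ∑ k ∈ Finset.Icc 1 m, μ k :=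
            Finset.single_le_sum (fun _ _ => Nat.zero_le _) hk
        _ = i := hsum
    have hcond : ∀ k j, k ∈ Finset.Icc 1 m ∧ j ∈ Finset.Icc 1 (μ k)
        ↔ k ∈ S j ∧ j ∈ Finset.Icc 1 i := by
      intro k j
      simp only [hS, Finset.mem_filter, Finset.mem_Icc]
      constructor
      · rintro ⟨⟨hk1, hk2⟩, hj1, hj2⟩
        exact ⟨⟨⟨hk1, hk2⟩, hj2⟩, hj1,
          le_trans hj2 (hmui k (Finset.mem_Icc.2 ⟨hk1, hk2⟩))⟩
      · rintro ⟨⟨⟨hk1, hk2⟩, hjk⟩, hj1, _⟩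
        exact ⟨⟨hk1, hk2⟩, hj1, hjk⟩
    have hSIcc : ∀ j, S j = Finset.Icc 1 (c j) := by
      intro j
      apply down_closed_eq_Icc m
      · exact Finset.filter_subset _ _
      · intro a ha b hb1 hba
        simp only [hS, Finset.mem_filter, Finset.mem_Icc] at ha ⊢
        exact ⟨⟨hb1, le_trans hba ha.1.2⟩,
          le_trans ha.2 (hanti a ha.1.2 b hb1 hba)⟩
    have hcjm : ∀ j, c j ≤ m := by
      intro j
      have := Finset.card_le_card (Finset.filter_subset (fun k => j ≤ μ k) (Finset.Icc 1 m))
      simp only [Nat.card_Icc] at this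
      simp only [hc, hS]
      omega
    have hcsum : ∑ j ∈ Finset.Icc 1 i, c j = i := by
      have h1 : ∑ k ∈ Finset.Icc 1 m, μ k
          = ∑ k ∈ Finset.Icc 1 m, ∑ j ∈ Finset.Icc 1 (μ k), 1 := by
        apply Finset.sum_congr rfl
        intro k _
        simp [Nat.card_Icc]
      rw [Finset.sum_comm' hcond, hsum] at h1
      simp only [Finset.sum_const, smul_eq_mul, mul_one] at h1
      simp only [hc]
      omega
    have row : ∀ k ∈ Finset.Icc 1 m, ((m:ℝ) - k + 1 + μ k)/((m:ℝ) - k + 1)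
        = ∏ j ∈ Finset.Icc 1 (μ k), (((m:ℝ) - k + j + 1)/((m:ℝ) - k + j)) := by
      intro k hk
      have hb := hbk k hk
      calc ((m:ℝ) - k + 1 + μ k)/((m:ℝ) - k + 1)
          = (((m:ℝ) - k + 1) + (μ k : ℝ)) / ((m:ℝ) - k + 1) := by ring
        _ = ∏ t ∈ Finset.range (μ k),
            ((((m:ℝ)-k+1) + t + 1)/(((m:ℝ)-k+1) + t)) := (tele _ _ hb).symm
        _ = ∏ j ∈ Finset.Icc 1 (μ k), (((m:ℝ) - k + j + 1)/((m:ℝ) - k + j)) := by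
            rw [prod_Icc_one]
            apply Finset.prod_congr rfl
            intro t _
            push_cast
            ring
    calc ∏ k ∈ Finset.Icc 1 m, (((m:ℝ) - k + 1 + μ k)/((m:ℝ) - k + 1))
        = ∏ k ∈ Finset.Icc 1 m, ∏ j ∈ Finset.Icc 1 (μ k),
            (((m:ℝ) - k + j + 1)/((m:ℝ) - k + j)) := Finset.prod_congr rfl row
      _ = ∏ j ∈ Finset.Icc 1 i, ∏ k ∈ S j,
            (((m:ℝ) - k + j + 1)/((m:ℝ) - k + j)) := Finset.prod_comm' hcond
      _ = ∏ j ∈ Finset.Icc 1 i, (((m:ℝ) + j)/((m:ℝ) + j - c j)) := by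
            apply Finset.prod_congr rfl
            intro j hj
            simp only [Finset.mem_Icc] at hj
            rw [hSIcc j]
            exact coltele m j (c j) hj.1 (hcjm j)
      _ ≤ ((m:ℝ)+1)/((m:ℝ)+1-i) := colprod_le m i c i hcsum him
  · -- equality
    intro h1 h0
    rw [Finset.prod_congr rfl hfac, hrhs]
    have hsub : Finset.Icc 1 i ⊆ Finset.Icc 1 m := by
      intro x hx; simp only [Finset.mem_Icc] at *; omega
    have hside : ∀ x ∈ Finset.Icc 1 m, x ∉ Finset.Icc 1 i →
        ((m:ℝ) - x + 1 + μ x)/((m:ℝ) - x + 1) = 1 := by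
      intro x hx hx'
      have hbx := hbk x hx
      simp only [Finset.mem_Icc] at hx hx'
      have hx0 : μ x = 0 := h0 x (by omega)
      rw [hx0]
      push_cast
      rw [add_zero]
      exact div_self hbx.ne'
    rw [← Finset.prod_subset hsub hside]
    calc ∏ k ∈ Finset.Icc 1 i, (((m:ℝ)-k+1+μ k)/((m:ℝ)-k+1))
        = ∏ k ∈ Finset.Icc 1 i, (((m:ℝ)-k+2)/((m:ℝ)-k+1)) := by
          apply Finset.prod_congr rfl
          intro k hk
          simp only [Finset.mem_Icc] at hk
          rw [h1 k hk.1 hk.2]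
          push_cast
          ring
      _ = ((m:ℝ)+1)/((m:ℝ)+1-i) := by
          rw [prod_Icc_one, ← Finset.prod_range_reflect]
          have hb : (0:ℝ) < (m:ℝ) - i + 1 := by linarith
          have ht := tele i ((m:ℝ) - i + 1) hb
          rw [show ((m:ℝ)+1)/((m:ℝ)+1-i)
              = (((m:ℝ)-i+1)+i)/((m:ℝ)-i+1) from by ring_nf, ← ht]
          apply Finset.prod_congr rfl
          intro t htr
          simp only [Finset.mem_range] at htr
          rw [show (1 + (i - 1 - t) : ℕ) = i - t from by omega,
            Nat.cast_sub (by omega : t ≤ i)]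
          ring
end

section
/- Let 1/2 ≤ p < 1 and let n and i be real numbers with 0 < i ≤ n/2 and n > 0. Then i·log(1 + ((1−p)/(1+p))·(2(n−i)/n)²) + (n−i)·log(1 + ((1−p)/(1+p))·(2i/n)²) ≥ 2 i·log(2/(1+p)), with equality when i = n/2. -/
/-- Bernoulli-type log inequality: for `0 ≤ u` and `0 ≤ a ≤ 1`,
`a * log (1+u) ≤ log (1 + a*u)`. -/
lemma bern_log {u a : ℝ} (hu : 0 ≤ u) (ha0 : 0 ≤ a) (ha1 : a ≤ 1) :
    a * Real.log (1 + u) ≤ Real.log (1 + a * u) := by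
  have h1 : (0:ℝ) < 1 + u := by linarith
  have hb := rpow_one_add_le_one_add_mul_self (by linarith : (-1:ℝ) ≤ u) ha0 ha1
  calc a * Real.log (1 + u) = Real.log ((1 + u) ^ a) := (Real.log_rpow h1 a).symm
    _ ≤ Real.log (1 + a * u) := Real.log_le_log (Real.rpow_pos_of_pos h1 a) hb

set_option maxHeartbeats 1000000 in
/-- The analytic inequality bounding the exponent in the eigenvalue bound for
the involution walk, with equality at `i = n/2`. -/
theorem stmt17 (p n i : ℝ) (hp : 1 / 2 ≤ p) (hp1 : p < 1) (hn : 0 < n)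
    (hi0 : 0 < i) (hin : i ≤ n / 2) :
    (i * Real.log (1 + ((1 - p) / (1 + p)) * (2 * (n - i) / n) ^ 2)
        + (n - i) * Real.log (1 + ((1 - p) / (1 + p)) * (2 * i / n) ^ 2)
      ≥ 2 * i * Real.log (2 / (1 + p))) ∧
    (i = n / 2 →
      i * Real.log (1 + ((1 - p) / (1 + p)) * (2 * (n - i) / n) ^ 2)
          + (n - i) * Real.log (1 + ((1 - p) / (1 + p)) * (2 * i / n) ^ 2)
        = 2 * i * Real.log (2 / (1 + p))) := by
  have hp0 : (0:ℝ) < 1 + p := by linarith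
  set c : ℝ := (1 - p) / (1 + p) with hc
  have hc0 : 0 < c := div_pos (by linarith) hp0
  have hc3 : c ≤ 1 / 3 := by
    rw [hc, div_le_div_iff₀ hp0 (by norm_num)]; linarith
  have h2c : 2 / (1 + p) = 1 + c := by
    rw [hc]; field_simp; norm_num
  set x : ℝ := i / n with hxdef
  have hx0 : 0 < x := div_pos hi0 hn
  have hx : x ≤ 1 / 2 := by
    rw [hxdef, div_le_div_iff₀ hn (by norm_num)]; linarith
  have hxn : x * n = i := by rw [hxdef]; field_simp
  have e1 : 2 * (n - i) / n = 2 * (1 - x) := by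
    rw [hxdef]; field_simp
  have e2 : 2 * i / n = 2 * x := by
    rw [hxdef]; field_simp
  have hL0 : 0 ≤ Real.log (1 + c) := Real.log_nonneg (by linarith)
  set L : ℝ := Real.log (1 + c) with hL
  -- Step A : log (1 + c * (2x)^2) ≥ 4x^2 * log (1+c)
  have hA : 4 * x ^ 2 * L ≤ Real.log (1 + c * (2 * x) ^ 2) := by
    have := bern_log (u := c) (a := 4 * x ^ 2) hc0.le (by positivity) (by nlinarith)
    calc 4 * x ^ 2 * L ≤ Real.log (1 + 4 * x ^ 2 * c) := this
      _ = Real.log (1 + c * (2 * x) ^ 2) := by ring_nf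
  -- Step B : log (1 + c * (2(1-x))^2) ≥ (2 - 4x + 4x^2) * log (1+c)
  have hB : (2 - 4 * x + 4 * x ^ 2) * L ≤ Real.log (1 + c * (2 * (1 - x)) ^ 2) := by
    have hb := bern_log (u := c) (a := (1 - 2 * x) ^ 2) hc0.le (by positivity) (by nlinarith)
    have h12x : (0:ℝ) ≤ 1 - 2 * x := by linarith
    have hsq : (1 - 2 * x) ^ 2 ≤ 1 - 2 * x := by nlinarith
    have hmul : L + Real.log (1 + (1 - 2 * x) ^ 2 * c)
        = Real.log ((1 + c) * (1 + (1 - 2 * x) ^ 2 * c)) :=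
      (Real.log_mul (by linarith) (by positivity)).symm
    have hinner : 1 + (1 - 2 * x) ^ 2 + (1 - 2 * x) ^ 2 * c ≤ 4 * (1 - x) ^ 2 := by
      nlinarith [mul_le_mul_of_nonneg_left hsq hc0.le,
        mul_le_mul_of_nonneg_right hc3 h12x]
    have halg : (1 + c) * (1 + (1 - 2 * x) ^ 2 * c) ≤ 1 + c * (2 * (1 - x)) ^ 2 := by
      have := mul_le_mul_of_nonneg_left hinner hc0.le
      nlinarith [this]
    calc (2 - 4 * x + 4 * x ^ 2) * L
        = L + (1 - 2 * x) ^ 2 * L := by ring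
      _ ≤ L + Real.log (1 + (1 - 2 * x) ^ 2 * c) := by linarith
      _ = Real.log ((1 + c) * (1 + (1 - 2 * x) ^ 2 * c)) := hmul
      _ ≤ Real.log (1 + c * (2 * (1 - x)) ^ 2) :=
          Real.log_le_log (by positivity) halg
  have hni : 0 < n - i := by linarith
  have hcoef : i * (2 - 4 * x + 4 * x ^ 2) + (n - i) * (4 * x ^ 2) = 2 * i := by
    linear_combination 4 * x * hxn
  constructor
  · rw [e1, e2, h2c, ← hL]
    have h1 : i * ((2 - 4 * x + 4 * x ^ 2) * L)
        ≤ i * Real.log (1 + c * (2 * (1 - x)) ^ 2) :=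
      mul_le_mul_of_nonneg_left hB hi0.le
    have h2 : (n - i) * (4 * x ^ 2 * L)
        ≤ (n - i) * Real.log (1 + c * (2 * x) ^ 2) :=
      mul_le_mul_of_nonneg_left hA hni.le
    have heq : i * ((2 - 4 * x + 4 * x ^ 2) * L) + (n - i) * (4 * x ^ 2 * L)
        = 2 * i * L := by
      calc i * ((2 - 4 * x + 4 * x ^ 2) * L) + (n - i) * (4 * x ^ 2 * L)
          = (i * (2 - 4 * x + 4 * x ^ 2) + (n - i) * (4 * x ^ 2)) * L := by ring
        _ = 2 * i * L := by rw [hcoef]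
    linarith
  · intro hieq
    subst hieq
    have hx12 : x = 1 / 2 := by
      have h : x * n = (1 / 2) * n := by linarith [hxn]
      exact mul_right_cancel₀ hn.ne' h
    rw [e1, e2, h2c, ← hL, hx12]
    norm_num
    ring
end
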